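/- For any p ∈ ℝ³, the trace of exp(p̂) equals 1 + 2cos(‖p‖). -/

import Mathlib

/-!
The eigenvalues of `p̂` are `0` and `±i‖p‖`. Rather than diagonalising, we use only the relation
`p̂³ = -‖p‖² p̂`: it shows that `tr (p̂ⁿ) = 0ⁿ + (i‖p‖)ⁿ + (-i‖p‖)ⁿ` for every `n`, so summing the
exponential series termwise gives `tr (exp p̂) = e⁰ + e^{i‖p‖} + e^{-i‖p‖} = 1 + 2 cos ‖p‖`.
-/

open Matrix Real
noncomputable section

def hat (p : EuclideanSpace ℝ (Fin 3)) : Matrix (Fin 3) (Fin 3) ℝ :=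
  !![0, -p 2, p 1; p 2, 0, -p 0; -p 1, p 0, 0]

open Nat NormedSpace in
theorem Matrix.hasSum_trace_exp {m 𝕜 : Type*} [Fintype m] [DecidableEq m] [RCLike 𝕜]
    (A : Matrix m m 𝕜) : HasSum (fun n => trace (A ^ n) / n !) (trace (exp A)) := by
  have h : HasSum (fun n => (n !⁻¹ : 𝕜) • A ^ n) (exp A) :=
    open scoped Norms.Operator in exp_series_hasSum_exp' A
  have := h.map (traceLinearMap m 𝕜 𝕜) continuous_id.matrix_trace
  simpa only [Function.comp_def, traceLinearMap_apply, trace_smul, smul_eq_mul,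
    div_eq_inv_mul] using this

theorem hat_pow_three (p : EuclideanSpace ℝ (Fin 3)) : hat p ^ 3 = -‖p‖ ^ 2 • hat p := by
  rw [EuclideanSpace.norm_sq_eq]
  ext i j
  fin_cases i <;> fin_cases j <;>
    simp [hat, pow_succ, Matrix.mul_apply, Fin.sum_univ_three] <;> ring

theorem hat_pow_add_three (p : EuclideanSpace ℝ (Fin 3)) (n : ℕ) :
    hat p ^ (n + 3) = -‖p‖ ^ 2 • hat p ^ (n + 1) := by
  rw [pow_add, hat_pow_three, mul_smul_comm, ← pow_succ]

theorem trace_hat_sq (p : EuclideanSpace ℝ (Fin 3)) : (hat p ^ 2).trace = -2 * ‖p‖ ^ 2 := by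
  rw [EuclideanSpace.norm_sq_eq, trace_fin_three, sq]
  simp only [hat, mul_apply, Fin.sum_univ_three, of_apply, cons_val', cons_val_zero, cons_val_one,
    cons_val_two, cons_val_fin_one, tail_cons, vecHead, Real.norm_eq_abs, sq_abs]
  ring

open Complex in
theorem trace_hat_pow (p : EuclideanSpace ℝ (Fin 3)) :
    ∀ n : ℕ, ((hat p ^ n).trace : ℂ) = 0 ^ n + (‖p‖ * I) ^ n + (-‖p‖ * I) ^ n
  | 0 => by norm_num [Fin.sum_univ_three]
  | 1 => by simp [hat, trace_fin_three]
  | 2 => by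
    rw [trace_hat_sq]
    push_cast
    linear_combination (-2 * (‖p‖ : ℂ) ^ 2) * I_sq
  | n + 3 => by
    rw [hat_pow_add_three, trace_smul, smul_eq_mul, ofReal_mul, trace_hat_pow p (n + 1)]
    simp only [pow_add _ (n + 1) 2, mul_pow, neg_sq, I_sq]
    push_cast
    ring

theorem trace_exp_hat (p : EuclideanSpace ℝ (Fin 3)) :
    (NormedSpace.exp (hat p)).trace = 1 + 2 * Real.cos ‖p‖ := by
  have hmat := Complex.hasSum_ofReal.mpr (hasSum_trace_exp (hat p))
  have heig := ((NormedSpace.expSeries_div_hasSum_exp (0 : ℂ)).add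
    (NormedSpace.expSeries_div_hasSum_exp ((‖p‖ : ℂ) * Complex.I))).add
    (NormedSpace.expSeries_div_hasSum_exp (-‖p‖ * Complex.I))
  simp only [← add_div, ← trace_hat_pow] at heig
  push_cast at hmat
  apply Complex.ofReal_injective
  rw [hmat.unique heig]
  push_cast
  rw [Complex.two_cos, Complex.exp_eq_exp_ℂ, NormedSpace.exp_zero, add_assoc]
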